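/- Let Ω be a nonzero positive semidefinite stress matrix of framework (G,p) and let y be a point of the Cayley configuration spectrahedron F of (G,p), i.e., X(y) = X + Σ_{{i,j} missing} y_ij M^{ij} ⪰ 0. Then Ω V X(y) V^T = 0. -/

import Mathlib

/-!
Since `V` has orthonormal columns orthogonal to `e`, appending the column `e` (with the row
`eᵀ / n` on the other side) gives a square matrix with a one-sided inverse, so
`V Vᵀ = I - e eᵀ / n`; as `Ω e = 0`, conjugation by `V Vᵀ` fixes `Ω`. Hence
`tr (Ω V X(y) Vᵀ) = tr (Ω P Pᵀ) - ½ ∑ y_ij tr (Ω E^{ij})`, which vanishes because `Ω P = 0`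
and `Ω` is zero on the missing edges. Finally, two positive semidefinite matrices whose product
has trace zero have product zero.
-/

open Matrix BigOperators

/-- `E^{ij}`: the symmetric matrix with 1's in entries `(i,j)` and `(j,i)`, 0 elsewhere. -/
def Eij {n : ℕ} (i j : Fin n) : Matrix (Fin n) (Fin n) ℝ :=
  Matrix.single i j 1 + Matrix.single j i 1

namespace Matrix

section Projection

variable {K ι κ : Type*} [Field K] [CharZero K] [Fintype ι] [Fintype κ] [DecidableEq ι]
  [DecidableEq κ]

theorem mul_transpose_add_smul_vecMulVec_eq_one (V : Matrix ι κ K)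
    (hcard : Fintype.card ι = Fintype.card κ + 1) (hVV : Vᵀ * V = 1)
    (hVe : Vᵀ *ᵥ (fun _ => 1) = 0) :
    V * Vᵀ + (Fintype.card ι : K)⁻¹ • vecMulVec (fun _ => 1) (fun _ => 1) = 1 := by
  set u : ι → K := fun _ => 1
  set w : ι → K := (Fintype.card ι : K)⁻¹ • u
  have hcard' : (Fintype.card ι : K) ≠ 0 := Nat.cast_ne_zero.mpr (by omega)
  have hwu : w ⬝ᵥ u = 1 := by simp [w, u, dotProduct, hcard']
  have hwV : w ᵥ* V = 0 := by
    rw [← mulVec_transpose, mulVec_smul, hVe, smul_zero]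
  have hleft : fromRows Vᵀ (replicateRow Unit w) * fromCols V (replicateCol Unit u) = 1 := by
    rw [fromRows_mul_fromCols, ← replicateCol_mulVec, ← replicateRow_vecMul,
      replicateRow_mul_replicateCol, hVV, hVe, hwV, hwu]
    ext (_ | _) (_ | _) <;> simp [one_apply]
  have e : ι ≃ κ ⊕ Unit := Fintype.equivOfCardEq (by simp [hcard])
  rw [← (fromCols_mul_fromRows_eq_one_comm e _ _ _ _).mpr hleft, fromCols_mul_fromRows,
    ← vecMulVec_eq Unit, vecMulVec_smul]

theorem mul_mul_transpose_eq_self_of_mulVec_eq_zero (V : Matrix ι κ K)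
    (hcard : Fintype.card ι = Fintype.card κ + 1) (hVV : Vᵀ * V = 1)
    (hVe : Vᵀ *ᵥ (fun _ => 1) = 0) {Ω : Matrix ι ι K} (hΩe : Ω *ᵥ (fun _ => 1) = 0) :
    Ω * (V * Vᵀ) = Ω := by
  rw [eq_sub_of_add_eq (mul_transpose_add_smul_vecMulVec_eq_one V hcard hVV hVe), Matrix.mul_sub,
    Matrix.mul_one, Matrix.mul_smul, mul_vecMulVec, hΩe, zero_vecMulVec, smul_zero, sub_zero]

end Projection

theorem trace_mul_conj_eq_of_mul_eq_self {R ι κ : Type*} [CommSemiring R] [Fintype ι] [Fintype κ]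
    {Ω : Matrix ι ι R} {B : Matrix ι κ R} {C : Matrix κ ι R} (hl : B * C * Ω = Ω)
    (hr : Ω * (B * C) = Ω) (Z : Matrix ι ι R) :
    (Ω * (B * (C * Z * B) * C)).trace = (Ω * Z).trace := by
  calc (Ω * (B * (C * Z * B) * C)).trace = (Ω * (B * C) * Z * (B * C)).trace := by
        simp only [Matrix.mul_assoc]
    _ = (B * C * Ω * Z).trace := by rw [hr, trace_mul_comm (Ω * Z), Matrix.mul_assoc (B * C)]
    _ = (Ω * Z).trace := by rw [hl]

open scoped MatrixOrder ComplexOrder in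
theorem PosSemidef.mul_eq_zero_of_trace_mul_eq_zero {𝕜 ι : Type*} [RCLike 𝕜] [Fintype ι]
    [DecidableEq ι] {A B : Matrix ι ι 𝕜} (hA : A.PosSemidef) (hB : B.PosSemidef)
    (h : (A * B).trace = 0) : A * B = 0 := by
  obtain ⟨E, rfl⟩ := CStarAlgebra.nonneg_iff_eq_star_mul_self.mp hA.nonneg
  obtain ⟨D, rfl⟩ := CStarAlgebra.nonneg_iff_eq_star_mul_self.mp hB.nonneg
  simp only [star_eq_conjTranspose] at hA h ⊢
  have hDAD : D * (Eᴴ * E) * Dᴴ = 0 := by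
    rw [← (hA.mul_mul_conjTranspose_same D).trace_eq_zero_iff, trace_mul_cycle, trace_mul_comm, h]
  have hED : E * Dᴴ = 0 := by
    rw [← conjTranspose_mul_self_eq_zero, conjTranspose_mul, conjTranspose_conjTranspose]
    simpa only [Matrix.mul_assoc] using hDAD
  rw [Matrix.mul_assoc, ← Matrix.mul_assoc E, hED, Matrix.zero_mul, Matrix.mul_zero]

end Matrix

theorem trace_mul_Eij {n : ℕ} (Ω : Matrix (Fin n) (Fin n) ℝ) (i j : Fin n) :
    (Ω * Eij i j).trace = Ω j i + Ω i j := by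
  simp [Eij, Matrix.mul_add, trace_mul_single]

theorem stmt15 (n r : ℕ) (G : SimpleGraph (Fin n)) [DecidableRel G.Adj]
    (P : Matrix (Fin n) (Fin r) ℝ)
    (V : Matrix (Fin n) (Fin (n - 1)) ℝ)
    (hVe : Vᵀ *ᵥ (fun _ => (1 : ℝ)) = 0) (hVV : Vᵀ * V = 1)
    (X : Matrix (Fin (n - 1)) (Fin (n - 1)) ℝ) (hX : X = Vᵀ * P * Pᵀ * V)
    (M : {q : Fin n × Fin n // q.1 < q.2 ∧ ¬ G.Adj q.1 q.2} →
        Matrix (Fin (n - 1)) (Fin (n - 1)) ℝ)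
    (hM : ∀ q, M q = (-(1/2) : ℝ) • (Vᵀ * Eij q.1.1 q.1.2 * V))
    (Ω : Matrix (Fin n) (Fin n) ℝ)
    (hΩP : Ω * P = 0) (hΩe : Ω *ᵥ (fun _ => (1 : ℝ)) = 0)
    (hΩmiss : ∀ i j, i ≠ j → ¬ G.Adj i j → Ω i j = 0)
    (hΩpsd : Ω.PosSemidef)
    (y : {q : Fin n × Fin n // q.1 < q.2 ∧ ¬ G.Adj q.1 q.2} → ℝ)
    (hy : (X + ∑ q, y q • M q).PosSemidef) :
    Ω * (V * (X + ∑ q, y q • M q) * Vᵀ) = 0 := by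
  rcases Nat.eq_zero_or_pos n with rfl | hn
  · exact Subsingleton.elim _ _
  have hΩV : Ω * (V * Vᵀ) = Ω :=
    mul_mul_transpose_eq_self_of_mulVec_eq_zero V (by simp only [Fintype.card_fin]; omega)
      hVV hVe hΩe
  have hVΩ : V * Vᵀ * Ω = Ω := by
    have hΩt : Ωᵀ = Ω := by
      simpa only [conjTranspose_eq_transpose_of_trivial] using hΩpsd.isHermitian.eq
    simpa only [transpose_mul, transpose_transpose, hΩt] using congrArg transpose hΩV
  have htrX : (Ω * (V * X * Vᵀ)).trace = 0 := by
    rw [hX, show Vᵀ * P * Pᵀ * V = Vᵀ * (P * Pᵀ) * V by simp only [Matrix.mul_assoc],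
      trace_mul_conj_eq_of_mul_eq_self hVΩ hΩV, ← Matrix.mul_assoc, hΩP, Matrix.zero_mul,
      trace_zero]
  have htrM : ∀ q, (Ω * (V * M q * Vᵀ)).trace = 0 := by
    rintro ⟨⟨i, j⟩, hij, hnadj⟩
    rw [hM, Matrix.mul_smul, Matrix.smul_mul, Matrix.mul_smul, trace_smul,
      trace_mul_conj_eq_of_mul_eq_self hVΩ hΩV, trace_mul_Eij,
      hΩmiss i j hij.ne hnadj, hΩmiss j i hij.ne' (fun h => hnadj h.symm), add_zero, smul_zero]
  have htr : (Ω * (V * (X + ∑ q, y q • M q) * Vᵀ)).trace = 0 := by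
    simp only [Matrix.mul_add, Matrix.add_mul, Matrix.mul_sum, Matrix.sum_mul, Matrix.mul_smul,
      Matrix.smul_mul, trace_add, trace_sum, trace_smul, htrX, htrM, smul_zero,
      Finset.sum_const_zero, add_zero]
  refine hΩpsd.mul_eq_zero_of_trace_mul_eq_zero ?_ htr
  simpa only [conjTranspose_eq_transpose_of_trivial] using hy.mul_mul_conjTranspose_same V
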